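/- Let E be a field of characteristic 2, a, c ∈ E and b ∈ E^× with b ∉ E^{×2}. Then the quaternion algebras [a,b)_E and [c,b)_E are isomorphic as E-algebras if and only if there exists d ∈ E with a + c + d²·b ∈ ℘(E). -/

import Mathlib

/-- The defining relations of the characteristic-2 quaternion algebra `[a,b)_E`:
generators `u = X 0`, `v = X 1` with `u² = a + u` (i.e. `u² + u = a`), `v² = b`,
and `u v = v u + v`. -/
inductive QuatRel (E : Type*) [Field E] (a b : E) :
    FreeAlgebra E (Fin 2) → FreeAlgebra E (Fin 2) → Prop
  | u_sq : QuatRel E a b (FreeAlgebra.ι E 0 * FreeAlgebra.ι E 0)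
      (algebraMap E _ a + FreeAlgebra.ι E 0)
  | v_sq : QuatRel E a b (FreeAlgebra.ι E 1 * FreeAlgebra.ι E 1) (algebraMap E _ b)
  | mul : QuatRel E a b (FreeAlgebra.ι E 0 * FreeAlgebra.ι E 1)
      (FreeAlgebra.ι E 1 * FreeAlgebra.ι E 0 + FreeAlgebra.ι E 1)

/-- The characteristic-2 quaternion algebra `[a,b)_E`. -/
def Quat (E : Type*) [Field E] (a b : E) := RingQuot (QuatRel E a b)

noncomputable instance (E : Type*) [Field E] (a b : E) : Ring (Quat E a b) :=
  inferInstanceAs (Ring (RingQuot (QuatRel E a b)))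

noncomputable instance (E : Type*) [Field E] (a b : E) : Algebra E (Quat E a b) :=
  inferInstanceAs (Algebra E (RingQuot (QuatRel E a b)))

/-!
In characteristic 2, `[a,b)_E` is Mathlib's `ℍ[E,a,1,b]` (`i² = a + i`, `j² = b`, `j i = j - i j`).
If `a + c + d² b = x² + x`, then `i ↦ x + i + d j`, `j ↦ j` defines `ℍ[E,a,1,b] ≃ ℍ[E,c,1,b]`,
and the same recipe inverts it. Conversely, for a homomorphism `f`, the defining relations force
`f i = α + i + γ j + δ k` and `f j = p + r j + s k` with
`a = α² + α + c + b N(γ, δ)` and `1 = b (γ s + δ r)² + N(r, s)`, where `N(y, z) = y² + y z + c z²`.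
If `δ = 0` then `d = γ` works; otherwise `s ≠ 0` since `b` is not a square, and
`d = γ + δ (1 + r) / s` works.
-/

open Quaternion QuaternionAlgebra

theorem exists_add_sq_mul_eq_of_norm_eq {E : Type*} [Field E] [CharP E 2] {a b c α γ δ r s : E}
    (hb : ¬ ∃ e : E, e ^ 2 = b) (ha : a = α ^ 2 + α + c + b * (γ ^ 2 + γ * δ + c * δ ^ 2))
    (hrs : b * (γ * s + δ * r) ^ 2 + (r ^ 2 + r * s + c * s ^ 2) = 1) :
    ∃ d x : E, a + c + d ^ 2 * b = x ^ 2 + x := by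
  rcases eq_or_ne δ 0 with rfl | hδ
  · exact ⟨γ, α, by grind⟩
  rcases eq_or_ne s 0 with rfl | hs
  · have hr : r ≠ 0 := by rintro rfl; simp at hrs
    refine (hb ⟨(1 + r) / (δ * r), ?_⟩).elim
    field_simp
    grind
  refine ⟨γ + δ * (1 + r) / s, α + b * δ * (γ * s + δ * r) / s, ?_⟩
  field_simp
  grind

namespace Quat

variable {E : Type*} [Field E] {a b : E}

noncomputable def u : Quat E a b := RingQuot.mkAlgHom E (QuatRel E a b) (FreeAlgebra.ι E 0)

noncomputable def v : Quat E a b := RingQuot.mkAlgHom E (QuatRel E a b) (FreeAlgebra.ι E 1)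

theorem u_mul_u : (u : Quat E a b) * u = algebraMap E _ a + u := by
  have h := RingQuot.mkAlgHom_rel E (QuatRel.u_sq (a := a) (b := b))
  simp only [map_mul, map_add, AlgHom.commutes] at h
  exact h

theorem v_mul_v : (v : Quat E a b) * v = algebraMap E _ b := by
  have h := RingQuot.mkAlgHom_rel E (QuatRel.v_sq (a := a) (b := b))
  simp only [map_mul, AlgHom.commutes] at h
  exact h

theorem u_mul_v : (u : Quat E a b) * v = v * u + v := by
  have h := RingQuot.mkAlgHom_rel E (QuatRel.mul (a := a) (b := b))
  simp only [map_mul, map_add] at h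
  exact h

@[ext]
theorem algHom_ext {A : Type*} [Semiring A] [Algebra E A] ⦃f g : Quat E a b →ₐ[E] A⦄
    (hu : f u = g u) (hv : f v = g v) : f = g := by
  apply RingQuot.ringQuot_ext'
  ext i
  fin_cases i
  exacts [hu, hv]

variable [CharP E 2]

theorem neg_eq_self (z : Quat E a b) : -z = z :=
  neg_eq_of_add_eq_zero_right (by rw [← two_smul E z, CharTwo.two_eq_zero, zero_smul])

noncomputable def toQuaternionAlgebra : Quat E a b →ₐ[E] ℍ[E,a,1,b] :=
  RingQuot.liftAlgHom E ⟨FreeAlgebra.lift E ![(Basis.self E).i, (Basis.self E).j], by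
    rintro x y ⟨⟩ <;> ext <;> simp <;> grind⟩

@[simp]
theorem toQuaternionAlgebra_u : toQuaternionAlgebra (u : Quat E a b) = (Basis.self E).i :=
  (RingQuot.liftAlgHom_mkAlgHom_apply _ _ _ _).trans (by simp)

@[simp]
theorem toQuaternionAlgebra_v : toQuaternionAlgebra (v : Quat E a b) = (Basis.self E).j :=
  (RingQuot.liftAlgHom_mkAlgHom_apply _ _ _ _).trans (by simp)

noncomputable def basis : Basis (Quat E a b) a 1 b where
  i := u
  j := v
  k := u * v
  i_mul_i := by rw [u_mul_u, Algebra.algebraMap_eq_smul_one, one_smul]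
  j_mul_j := by rw [v_mul_v, Algebra.algebraMap_eq_smul_one]
  i_mul_j := rfl
  j_mul_i := by rw [one_smul, u_mul_v, sub_add_cancel_right, neg_eq_self]

noncomputable def equivQuaternionAlgebra : Quat E a b ≃ₐ[E] ℍ[E,a,1,b] :=
  .ofAlgHom toQuaternionAlgebra (lift basis)
    (hom_ext (by simp [basis, Basis.lift]) (by simp [basis, Basis.lift]))
    (by ext <;> simp [basis, Basis.lift])

end Quat

namespace QuaternionAlgebra

variable {E : Type*} [Field E] [CharP E 2] {a b c : E}

def Basis.ofArtinSchreier {d x : E} (h : a + c + d ^ 2 * b = x ^ 2 + x) :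
    Basis ℍ[E,c,1,b] a 1 b where
  i := ⟨x, 1, d, 0⟩
  j := ⟨0, 0, 1, 0⟩
  k := ⟨b * d, 0, x, 1⟩
  i_mul_i := by ext <;> simp <;> grind
  j_mul_j := by ext <;> simp
  i_mul_j := by ext <;> simp
  j_mul_i := by ext <;> simp <;> grind

theorem lift_ofArtinSchreier_comp {d x : E} (h : a + c + d ^ 2 * b = x ^ 2 + x)
    (h' : c + a + d ^ 2 * b = x ^ 2 + x) :
    (lift (Basis.ofArtinSchreier h)).comp (lift (Basis.ofArtinSchreier h')) = AlgHom.id E _ := by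
  ext <;> simp [Basis.ofArtinSchreier, Basis.lift] <;> grind

def equivOfArtinSchreier {d x : E} (h : a + c + d ^ 2 * b = x ^ 2 + x) :
    ℍ[E,a,1,b] ≃ₐ[E] ℍ[E,c,1,b] :=
  have h' : c + a + d ^ 2 * b = x ^ 2 + x := by rw [add_comm c]; exact h
  .ofAlgHom _ _ (lift_ofArtinSchreier_comp h h') (lift_ofArtinSchreier_comp h' h)

theorem exists_add_sq_mul_eq_of_algHom (f : ℍ[E,a,1,b] →ₐ[E] ℍ[E,c,1,b])
    (hb : ¬ ∃ e : E, e ^ 2 = b) : ∃ d x : E, a + c + d ^ 2 * b = x ^ 2 + x := by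
  have hb0 : b ≠ 0 := by rintro rfl; exact hb ⟨0, zero_pow two_ne_zero⟩
  let B := (Basis.self E).compHom f
  have hii := B.i_mul_i
  have hjj := B.j_mul_j
  have hji := B.j_mul_i
  rw [← B.i_mul_j] at hji
  generalize B.i = U at hii hji
  generalize B.j = V at hjj hji
  obtain ⟨α, β, γ, δ⟩ := U
  obtain ⟨p, q, r, s⟩ := V
  simp only [QuaternionAlgebra.ext_iff, mk_mul_mk, mk_sub_mk, one_mul, mul_one, mul_zero, zero_add,
    one_smul, smul_eq_mul, re_add, re_smul, re_one, imI_add, imI_smul, imI_one, imJ_add, imJ_smul,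
    imJ_one, imK_add, imK_smul, imK_one] at hii hjj hji
  obtain ⟨ii_re, ii_i, ii_j, ii_k⟩ := hii
  obtain ⟨jj_re, jj_i, -, -⟩ := hjj
  obtain ⟨ji_re, -, ji_j, ji_k⟩ := hji
  have hq : q = 0 := pow_eq_zero_iff two_ne_zero |>.mp (by grind)
  subst hq
  -- otherwise `f i` is a scalar, so `f j = f j * f i - f i * f j = 0`, while `f j * f j = b ≠ 0`
  have hβ : β = 1 := by
    by_contra hβ
    have hβ0 : β = 0 := by grind
    subst hβ0
    have hγ : γ = 0 := by grind
    have hδ : δ = 0 := by grind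
    subst hγ hδ
    have hr : r = 0 := by grind
    have hs : s = 0 := by grind
    have hp : p = 0 := by grind
    subst hr hs hp
    exact hb0 (by grind)
  subst hβ
  refine exists_add_sq_mul_eq_of_norm_eq (α := α) (γ := γ) (δ := δ) (r := r) (s := s) hb
    (by grind) (mul_left_cancel₀ hb0 ?_)
  grind

theorem nonempty_algEquiv_iff (hb : ¬ ∃ e : E, e ^ 2 = b) :
    Nonempty (ℍ[E,a,1,b] ≃ₐ[E] ℍ[E,c,1,b]) ↔ ∃ d x : E, a + c + d ^ 2 * b = x ^ 2 + x :=
  ⟨fun ⟨φ⟩ => exists_add_sq_mul_eq_of_algHom φ.toAlgHom hb,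
    fun ⟨_, _, h⟩ => ⟨equivOfArtinSchreier h⟩⟩

end QuaternionAlgebra

theorem stmt4_general (E : Type*) [Field E] [CharP E 2] (a c b : E)
    (hb2 : ¬ ∃ e : E, e ^ 2 = b) :
    Nonempty (Quat E a b ≃ₐ[E] Quat E c b) ↔
      ∃ d x : E, a + c + d ^ 2 * b = x ^ 2 + x :=
  (AlgEquiv.equivCongr Quat.equivQuaternionAlgebra Quat.equivQuaternionAlgebra).nonempty_congr.trans
    (nonempty_algEquiv_iff hb2)

/-- If `b ∉ E^{×2}`, then `[a,b)_E ≅ [c,b)_E` iff `a + c + d²·b ∈ ℘(E)`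
for some `d ∈ E`. -/
theorem stmt4 (E : Type*) [Field E] [CharP E 2] (a c b : E) (hb : b ≠ 0)
    (hb2 : ¬ ∃ e : E, e ^ 2 = b) :
    Nonempty (Quat E a b ≃ₐ[E] Quat E c b) ↔
      ∃ d x : E, a + c + d ^ 2 * b = x ^ 2 + x :=
  stmt4_general E a c b hb2
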